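/- arXiv:2412.11028 — 6 statements merged into one kernel-verified Lean document; each statement's English description precedes it below -/
import Mathlib

section
/- For every integer n ≥ 2 and every real number r > 1, one has (1/((r+1)^n − (r−1)^n)) · ∫_{t=0}^{2} ((r+1)^n − (r+t−1)^n) dt > 1. (Equivalently, the expected order of vanishing S_X(V_0) of the zero section V_0 on X = P_V(𝓛 ⊕ O_V) exceeds 1, so β_X(V_0) = 1 − S_X(V_0) < 0 and X is K-unstable.) -/
-- Bernoulli-type: (b+2)^(m+1) ≥ b^(m+1) + 2(m+1) b^m for b ≥ 0
lemma bern_aux (b : ℝ) (hb : 0 ≤ b) (m : ℕ) :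
    b ^ (m + 1) + 2 * (m + 1) * b ^ m ≤ (b + 2) ^ (m + 1) := by
  induction m with
  | zero => simp
  | succ m ih =>
      have hpow : (0:ℝ) ≤ b ^ m := pow_nonneg hb m
      have h1 : (b + 2) * (b ^ (m + 1) + 2 * (m + 1) * b ^ m) ≤ (b + 2) * (b + 2) ^ (m + 1) :=
        mul_le_mul_of_nonneg_left ih (by linarith)
      have e1 : (b + 2) ^ (m + 2) = (b + 2) * (b + 2) ^ (m + 1) := by ring
      have e2 : b ^ (m + 2) = b * b ^ (m + 1) := by ring
      have e3 : b ^ (m + 1) = b * b ^ m := by ring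
      push_cast
      nlinarith [h1, hpow, pow_nonneg hb (m+1)]

lemma key_aux (b : ℝ) (hb : 0 < b) (n : ℕ) (hn : 2 ≤ n) :
    (b + 2) ^ (n + 1) - b ^ (n + 1) < ((n : ℝ) + 1) * ((b + 2) ^ n + b ^ n) := by
  induction n, hn using Nat.le_induction with
  | base => norm_num; nlinarith
  | succ n hn ih =>
      have hbern := bern_aux b hb.le n
      have h1 : (b + 2) * ((b + 2) ^ (n + 1) - b ^ (n + 1)) <
          (b + 2) * (((n : ℝ) + 1) * ((b + 2) ^ n + b ^ n)) :=
        mul_lt_mul_of_pos_left ih (by linarith)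
      have e1 : (b + 2) ^ (n + 2) = (b + 2) * (b + 2) ^ (n + 1) := by ring
      have e2 : b ^ (n + 2) = b * b ^ (n + 1) := by ring
      have e3 : b ^ (n + 1) = b * b ^ n := by ring
      have e4 : (b + 2) ^ (n + 1) = (b + 2) * (b + 2) ^ n := by ring
      push_cast
      nlinarith [h1, hbern, pow_nonneg hb.le n, pow_nonneg hb.le (n+1)]

theorem stmt_0 (n : ℕ) (hn : 2 ≤ n) (r : ℝ) (hr : 1 < r) :
    (1 / ((r + 1) ^ n - (r - 1) ^ n)) *
      (∫ t in (0:ℝ)..2, ((r + 1) ^ n - (r + t - 1) ^ n)) > 1 := by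
  have hb : (0:ℝ) < r - 1 := by linarith
  have hD : (0:ℝ) < (r + 1) ^ n - (r - 1) ^ n := by
    have := pow_lt_pow_left₀ (show r - 1 < r + 1 by linarith) hb.le (by omega : n ≠ 0)
    linarith
  -- compute the integral
  have hint : (∫ t in (0:ℝ)..2, ((r + 1) ^ n - (r + t - 1) ^ n)) =
      2 * (r + 1) ^ n - ((r + 1) ^ (n + 1) - (r - 1) ^ (n + 1)) / ((n : ℝ) + 1) := by
    have hre : ∀ t : ℝ, r + t - 1 = t + (r - 1) := by intro t; ring
    have hI1 : IntervalIntegrable (fun _ : ℝ => (r + 1) ^ n) MeasureTheory.volume 0 2 :=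
      intervalIntegrable_const
    have hI2 : IntervalIntegrable (fun t : ℝ => (r + t - 1) ^ n) MeasureTheory.volume 0 2 := by
      apply Continuous.intervalIntegrable
      continuity
    rw [intervalIntegral.integral_sub hI1 hI2]
    simp only [hre]
    rw [intervalIntegral.integral_comp_add_right (fun t : ℝ => t ^ n) (r - 1)]
    rw [integral_pow]
    simp [intervalIntegral.integral_const]
    push_cast
    ring
  rw [hint]
  have hk := key_aux (r - 1) hb n hn
  have hre2 : r - 1 + 2 = r + 1 := by ring
  rw [hre2] at hk
  have h2 : ((r + 1) ^ (n + 1) - (r - 1) ^ (n + 1)) / ((n : ℝ) + 1) <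
      (r + 1) ^ n + (r - 1) ^ n := by
    rw [div_lt_iff₀ (by positivity)]
    linarith [hk]
  rw [gt_iff_lt, one_div, inv_mul_eq_div, lt_div_iff₀ hD]
  nlinarith [h2]
end

section
/- For every integer n ≥ 2 and every real number r > 1, one has (n+1)·((r+1)^n + (r−1)^n) > (r+1)^{n+1} − (r−1)^{n+1}. -/
lemma pair_le (a b : ℝ) (hb : 0 ≤ b) (hab : b ≤ a) (n i : ℕ) (hi : i ≤ n) :
    a ^ i * b ^ (n - i) + a ^ (n - i) * b ^ i ≤ a ^ n + b ^ n := by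
  have h1 : a ^ i * a ^ (n - i) = a ^ n := by rw [← pow_add]; congr 1; omega
  have h2 : b ^ i * b ^ (n - i) = b ^ n := by rw [← pow_add]; congr 1; omega
  have hkey : 0 ≤ (a ^ i - b ^ i) * (a ^ (n - i) - b ^ (n - i)) :=
    mul_nonneg (sub_nonneg.2 (pow_le_pow_left₀ hb hab i))
      (sub_nonneg.2 (pow_le_pow_left₀ hb hab (n - i)))
  nlinarith [hkey]

theorem stmt_1 (n : ℕ) (hn : 2 ≤ n) (r : ℝ) (hr : 1 < r) :
    ((n : ℝ) + 1) * ((r + 1) ^ n + (r - 1) ^ n) > (r + 1) ^ (n + 1) - (r - 1) ^ (n + 1) := by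
  set a : ℝ := r + 1 with ha
  set b : ℝ := r - 1 with hbdef
  have hb : 0 < b := by simp [hbdef]; linarith
  have hab : b < a := by simp [ha, hbdef]; linarith
  have hfac : (∑ i ∈ Finset.range (n + 1), a ^ i * b ^ (n + 1 - 1 - i)) * (a - b)
      = a ^ (n + 1) - b ^ (n + 1) := geom_sum₂_mul a b (n + 1)
  have hab2 : a - b = 2 := by simp [ha, hbdef]; ring
  set S : ℝ := ∑ i ∈ Finset.range (n + 1), a ^ i * b ^ (n - i) with hS
  have hfac' : a ^ (n + 1) - b ^ (n + 1) = 2 * S := by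
    rw [← hfac, hab2]
    have : (n + 1 - 1) = n := by omega
    simp only [this, hS]
    ring
  have hrefl : S = ∑ i ∈ Finset.range (n + 1), a ^ (n - i) * b ^ i := by
    rw [hS]
    rw [← Finset.sum_range_reflect (fun i => a ^ i * b ^ (n - i)) (n + 1)]
    apply Finset.sum_congr rfl
    intro i hi
    simp only [Finset.mem_range] at hi
    congr 2 <;> omega
  have h2S : 2 * S = ∑ i ∈ Finset.range (n + 1),
      (a ^ i * b ^ (n - i) + a ^ (n - i) * b ^ i) := by
    rw [Finset.sum_add_distrib, ← hrefl, two_mul]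
  have hlt : (∑ i ∈ Finset.range (n + 1),
      (a ^ i * b ^ (n - i) + a ^ (n - i) * b ^ i))
      < ∑ _i ∈ Finset.range (n + 1), (a ^ n + b ^ n) := by
    apply Finset.sum_lt_sum
    · intro i hi
      simp only [Finset.mem_range] at hi
      exact pair_le a b hb.le hab.le n i (by omega)
    · refine ⟨1, Finset.mem_range.2 (by omega), ?_⟩
      have h1 : a ^ 1 * a ^ (n - 1) = a ^ n := by rw [← pow_add]; congr 1; omega
      have h2 : b ^ 1 * b ^ (n - 1) = b ^ n := by rw [← pow_add]; congr 1; omega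
      have hkey : 0 < (a ^ 1 - b ^ 1) * (a ^ (n - 1) - b ^ (n - 1)) := by
        apply mul_pos
        · simpa using sub_pos.2 hab
        · exact sub_pos.2 (pow_lt_pow_left₀ hab hb.le (by omega))
      nlinarith [hkey]
  have hsum : (∑ _i ∈ Finset.range (n + 1), (a ^ n + b ^ n))
      = ((n : ℝ) + 1) * (a ^ n + b ^ n) := by
    rw [Finset.sum_const, Finset.card_range]
    push_cast
    ring
  rw [gt_iff_lt, hfac', h2S]
  rw [hsum] at hlt
  exact hlt
end

section
/- For every integer n ≥ 2 and all real numbers r > 1 and l with 0 < l < r+1 and l ≠ 1, one has (r^n − (r+1−l)^n)/(l−1) + r^n − (r−1)^n > 0. -/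
theorem stmt_7 (n : ℕ) (hn : 2 ≤ n) (r l : ℝ) (hr : 1 < r)
    (hl0 : 0 < l) (hlr : l < r + 1) (hl1 : l ≠ 1) :
    (r ^ n - (r + 1 - l) ^ n) / (l - 1) + r ^ n - (r - 1) ^ n > 0 := by
  have hn0 : n ≠ 0 := by omega
  have h2 : (r - 1) ^ n < r ^ n :=
    pow_lt_pow_left₀ (by linarith) (by linarith) hn0
  have h1 : 0 < (r ^ n - (r + 1 - l) ^ n) / (l - 1) := by
    rcases lt_or_gt_of_ne hl1 with h | h
    · have hs : r < r + 1 - l := by linarith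
      have : r ^ n < (r + 1 - l) ^ n :=
        pow_lt_pow_left₀ hs (by linarith) hn0
      exact div_pos_of_neg_of_neg (by linarith) (by linarith)
    · have hs : r + 1 - l < r := by linarith
      have : (r + 1 - l) ^ n < r ^ n :=
        pow_lt_pow_left₀ hs (by linarith) hn0
      exact div_pos (by linarith) (by linarith)
  linarith
end

section
/- For every integer n ≥ 2 and all real numbers r > 1 and l with 0 < l < r+1 and l ≠ 1, one has ∫_{t=0}^{1} [ (((1−t)(1−l)+r)^n − r^n)/(1−l) + r^n − 2(r−1)^n + (r+t−1)^n ] dt + ∫_{t=0}^{1} [ ((r+1−l)^n − r^n)/(1−l) + r^n − (r+t−1)^n + ((r+1−l)^n − (r+t(1−l))^n)/(1−l) ] dt = 2·[ (r^n − (r+1−l)^n)/(l−1) + r^n − (r−1)^n ]. -/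
theorem intervalIntegral.integral_comp_add_sub_sub_eq_zero {E : Type*} [NormedAddCommGroup E]
    [NormedSpace ℝ E] (f : ℝ → E) (a b : ℝ) :
    ∫ t in a..b, (f (a + b - t) - f t) = 0 := by
  set g : ℝ → E := fun t => f (a + b - t) - f t
  have hg_antisymm : ∀ t, g (a + b - t) = -g t := fun t => by simp [g]
  have hg_reflect : ∫ t in a..b, g (a + b - t) = ∫ t in a..b, g t := by
    rw [intervalIntegral.integral_comp_sub_left, add_sub_cancel_left, add_sub_cancel_right]
  simp only [hg_antisymm, intervalIntegral.integral_neg] at hg_reflect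
  rw [neg_eq_iff_add_eq_zero, ← two_smul ℝ] at hg_reflect
  exact (smul_eq_zero.mp hg_reflect).resolve_left two_ne_zero

theorem stmt_8_general (n : ℕ) (r l : ℝ) :
    (∫ t in (0:ℝ)..1,
        ((((1 - t) * (1 - l) + r) ^ n - r ^ n) / (1 - l) + r ^ n - 2 * (r - 1) ^ n +
          (r + t - 1) ^ n)) +
      (∫ t in (0:ℝ)..1,
        (((r + 1 - l) ^ n - r ^ n) / (1 - l) + r ^ n - (r + t - 1) ^ n +
          ((r + 1 - l) ^ n - (r + t * (1 - l)) ^ n) / (1 - l))) =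
      2 * ((r ^ n - (r + 1 - l) ^ n) / (l - 1) + r ^ n - (r - 1) ^ n) := by
  set f : ℝ → ℝ := fun t => (r + t * (1 - l)) ^ n
  -- The terms `(r + t - 1) ^ n` cancel pointwise; the two `f`-terms only after reflecting `t ↦ 1 - t`.
  set K : ℝ := 2 * (((r + 1 - l) ^ n - r ^ n) / (1 - l) + r ^ n - (r - 1) ^ n)
  calc _ = ∫ t in (0:ℝ)..1, (K + (f (0 + 1 - t) - f t) / (1 - l)) := by
        rw [← intervalIntegral.integral_add (by apply Continuous.intervalIntegrable; fun_prop)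
          (by apply Continuous.intervalIntegrable; fun_prop)]
        congr 1 with t
        simp only [f, K]
        ring
    _ = K := by
        rw [intervalIntegral.integral_add intervalIntegrable_const
            (by apply Continuous.intervalIntegrable; fun_prop),
          intervalIntegral.integral_div, intervalIntegral.integral_comp_add_sub_sub_eq_zero]
        simp
    _ = _ := by
        rw [← neg_sub (1 : ℝ) l, div_neg]
        ring

theorem stmt_8 (n : ℕ) (hn : 2 ≤ n) (r l : ℝ) (hr : 1 < r)
    (hl0 : 0 < l) (hlr : l < r + 1) (hl1 : l ≠ 1) :
    (∫ t in (0:ℝ)..1,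
        ((((1 - t) * (1 - l) + r) ^ n - r ^ n) / (1 - l) + r ^ n - 2 * (r - 1) ^ n +
          (r + t - 1) ^ n)) +
      (∫ t in (0:ℝ)..1,
        (((r + 1 - l) ^ n - r ^ n) / (1 - l) + r ^ n - (r + t - 1) ^ n +
          ((r + 1 - l) ^ n - (r + t * (1 - l)) ^ n) / (1 - l))) =
      2 * ((r ^ n - (r + 1 - l) ^ n) / (l - 1) + r ^ n - (r - 1) ^ n) :=
  stmt_8_general n r l
end

section
/- Fix an integer n ≥ 2 and real numbers r > 1 and l with 0 < l < r+1, l ≠ 1, and define I(n,r,l) := ∫_{t=0}^{1} [ ((r+(t−1)(l−1))^n − (r+1−l)^n)/(l−1) + (r−1)^n − (r+t−1)^n ] dt. Then I(n,r,l) > 0 whenever 0 < l < 2 (l ≠ 1), and I(n,r,l) < 0 whenever 2 < l < r+1. In particular I(n,r,l) ≠ 0 for every l ≠ 2 in the stated range. -/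
open Set

private lemma secant_lt {g : ℝ → ℝ} (hg : StrictConvexOn ℝ (Ici 0) g)
    {w x y z : ℝ} (hw : (0:ℝ) ≤ w) (hy : (0:ℝ) ≤ y) (hz : (0:ℝ) ≤ z)
    (hwx : w < x) (hyz : y < z) (hwy : w < y) (hxz : x < z) :
    (g x - g w) / (x - w) < (g z - g y) / (z - y) := by
  have hx : (0:ℝ) ≤ x := le_of_lt (lt_of_le_of_lt hw hwx)
  have h1 : (g x - g w) / (x - w) < (g z - g w) / (z - w) :=
    hg.secant_strict_mono hw hx hz (ne_of_gt hwx) (ne_of_gt (hwy.trans hyz)) hxz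
  have h2 : (g w - g z) / (w - z) < (g y - g z) / (y - z) :=
    hg.secant_strict_mono hz hw hy (ne_of_lt (hwx.trans hxz)) (ne_of_lt hyz) hwy
  have e1 : (g w - g z) / (w - z) = (g z - g w) / (z - w) := by
    rw [← neg_div_neg_eq]; ring_nf
  have e2 : (g y - g z) / (y - z) = (g z - g y) / (z - y) := by
    rw [← neg_div_neg_eq]; ring_nf
  rw [e1, e2] at h2
  exact h1.trans h2

private lemma key_pos (n : ℕ) (hn : 2 ≤ n) (r a u : ℝ) (hr : 1 < r)
    (ha0 : a ≠ 0) (ha1 : a < 1) (hu0 : 0 < u) (hu1 : u < 1) :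
    0 < ((r - u * a) ^ n - (r - a) ^ n) / a + (r - 1) ^ n - (r - u) ^ n := by
  have hg := strictConvexOn_pow hn
  have h1u : (0:ℝ) < 1 - u := by linarith
  rcases lt_or_gt_of_ne ha0 with haneg | hapos
  · -- a < 0 : use w=r-1, x=r-u, y=r-u*a, z=r-a
    have hT : ((r-u)^n - (r-1)^n) / ((r-u) - (r-1)) <
        ((r-a)^n - (r-u*a)^n) / ((r-a) - (r-u*a)) := by
      apply secant_lt hg (by linarith) (by nlinarith) (by linarith)
      · linarith
      · nlinarith
      · nlinarith
      · linarith
    have ha' : (r-a) - (r-u*a) = -(a * (1-u)) := by ring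
    have hb' : (r-u) - (r-1) = 1 - u := by ring
    rw [ha', hb'] at hT
    rw [div_lt_div_iff₀ h1u (by nlinarith : (0:ℝ) < -(a*(1-u)))] at hT
    -- hT : ((r-u)^n - (r-1)^n) * -(a*(1-u)) < ((r-a)^n - (r-u*a)^n) * (1-u)
    have hkey : (r-u*a)^n - (r-a)^n < ((r-u)^n - (r-1)^n) * a := by nlinarith [hT]
    have : (r-u)^n - (r-1)^n < ((r - u * a) ^ n - (r - a) ^ n) / a :=
      (lt_div_iff_of_neg haneg).mpr hkey
    linarith
  · -- 0 < a < 1 : w=r-1, x=r-u, y=r-a, z=r-u*a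
    have hT : ((r-u)^n - (r-1)^n) / ((r-u) - (r-1)) <
        ((r-u*a)^n - (r-a)^n) / ((r-u*a) - (r-a)) := by
      apply secant_lt hg (by linarith) (by linarith) (by nlinarith)
      · linarith
      · nlinarith
      · linarith
      · nlinarith
    have ha' : (r-u*a) - (r-a) = a * (1-u) := by ring
    have hb' : (r-u) - (r-1) = 1 - u := by ring
    rw [ha', hb'] at hT
    rw [div_lt_div_iff₀ h1u (by positivity : (0:ℝ) < a*(1-u))] at hT
    have hkey : ((r-u)^n - (r-1)^n) * a < (r-u*a)^n - (r-a)^n := by nlinarith [hT]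
    have : (r-u)^n - (r-1)^n < ((r - u * a) ^ n - (r - a) ^ n) / a :=
      (lt_div_iff₀ hapos).mpr hkey
    linarith

private lemma key_neg (n : ℕ) (hn : 2 ≤ n) (r a u : ℝ) (hr : 1 < r)
    (ha1 : 1 < a) (har : a < r) (hu0 : 0 < u) (hu1 : u < 1) :
    ((r - u * a) ^ n - (r - a) ^ n) / a + (r - 1) ^ n - (r - u) ^ n < 0 := by
  have hg := strictConvexOn_pow hn
  have h1u : (0:ℝ) < 1 - u := by linarith
  have hapos : (0:ℝ) < a := by linarith
  -- w=r-a, x=r-u*a, y=r-1, z=r-u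
  have hT : ((r-u*a)^n - (r-a)^n) / ((r-u*a) - (r-a)) <
      ((r-u)^n - (r-1)^n) / ((r-u) - (r-1)) := by
    apply secant_lt hg (by linarith) (by linarith) (by linarith)
    · nlinarith
    · linarith
    · linarith
    · nlinarith
  have ha' : (r-u*a) - (r-a) = a * (1-u) := by ring
  have hb' : (r-u) - (r-1) = 1 - u := by ring
  rw [ha', hb'] at hT
  rw [div_lt_div_iff₀ (by positivity : (0:ℝ) < a*(1-u)) h1u] at hT
  have hkey : (r-u*a)^n - (r-a)^n < ((r-u)^n - (r-1)^n) * a := by nlinarith [hT]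
  have : ((r - u * a) ^ n - (r - a) ^ n) / a < (r-u)^n - (r-1)^n :=
    (div_lt_iff₀ hapos).mpr hkey
  linarith

theorem stmt_10 (n : ℕ) (hn : 2 ≤ n) (r l : ℝ) (hr : 1 < r)
    (hl0 : 0 < l) (hlr : l < r + 1) (hl1 : l ≠ 1) :
    (l < 2 →
        0 < ∫ t in (0:ℝ)..1,
          (((r + (t - 1) * (l - 1)) ^ n - (r + 1 - l) ^ n) / (l - 1) + (r - 1) ^ n -
            (r + t - 1) ^ n)) ∧
      (2 < l →
        (∫ t in (0:ℝ)..1,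
          (((r + (t - 1) * (l - 1)) ^ n - (r + 1 - l) ^ n) / (l - 1) + (r - 1) ^ n -
            (r + t - 1) ^ n)) < 0) ∧
      (l ≠ 2 →
        (∫ t in (0:ℝ)..1,
          (((r + (t - 1) * (l - 1)) ^ n - (r + 1 - l) ^ n) / (l - 1) + (r - 1) ^ n -
            (r + t - 1) ^ n)) ≠ 0) := by
  set F : ℝ → ℝ := fun t =>
    ((r + (t - 1) * (l - 1)) ^ n - (r + 1 - l) ^ n) / (l - 1) + (r - 1) ^ n - (r + t - 1) ^ n
    with hF
  have hcont : Continuous F := by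
    apply Continuous.sub
    apply Continuous.add
    · exact (((continuous_const.add ((continuous_id.sub continuous_const).mul
        continuous_const)).pow n).sub continuous_const).div_const _
    · exact continuous_const
    · exact ((continuous_const.add continuous_id).sub continuous_const).pow n
  have hint : IntervalIntegrable F MeasureTheory.volume 0 1 :=
    hcont.intervalIntegrable 0 1
  have hEq : ∀ t : ℝ, F t =
      ((r - (1-t) * (l-1)) ^ n - (r - (l-1)) ^ n) / (l-1) + (r - 1) ^ n - (r - (1-t)) ^ n := by
    intro t
    simp only [hF]
    rw [(by ring : r + (t - 1) * (l - 1) = r - (1-t)*(l-1)),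
      (by ring : r + 1 - l = r - (l-1)), (by ring : r + t - 1 = r - (1-t))]
  have ha0 : l - 1 ≠ 0 := sub_ne_zero.mpr hl1
  have Hpos : l < 2 → 0 < ∫ t in (0:ℝ)..1, F t := by
    intro hl2
    apply intervalIntegral.intervalIntegral_pos_of_pos_on hint _ one_pos
    intro t ht
    rw [hEq t]
    exact key_pos n hn r (l-1) (1-t) hr ha0 (by linarith) (by linarith [ht.2]) (by linarith [ht.1])
  have Hneg : 2 < l → (∫ t in (0:ℝ)..1, F t) < 0 := by
    intro hl2
    have : 0 < ∫ t in (0:ℝ)..1, (-F) t := by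
      apply intervalIntegral.intervalIntegral_pos_of_pos_on hint.neg _ one_pos
      intro t ht
      simp only [Pi.neg_apply]
      rw [neg_pos, hEq t]
      exact key_neg n hn r (l-1) (1-t) hr (by linarith) (by linarith)
        (by linarith [ht.2]) (by linarith [ht.1])
    simp only [Pi.neg_apply, intervalIntegral.integral_neg] at this
    linarith
  refine ⟨Hpos, Hneg, fun hl2 => ?_⟩
  rcases lt_or_gt_of_ne hl2 with h | h
  · exact ne_of_gt (Hpos h)
  · exact ne_of_lt (Hneg h)
end

section
/- Let K be a field and H a finite-dimensional K-vector space equipped with an internal direct sum decomposition H = ⊕_{i ∈ ι} H_i into subspaces. Let F and G be two decreasing filtrations of H by subspaces (families of subspaces F^λ, G^λ of H indexed by λ ∈ ℝ with F^μ ⊆ F^λ and G^μ ⊆ G^λ whenever λ ≤ μ) such that every F^λ and every G^λ is a graded subspace, i.e. equals the (internal) sum over i ∈ ι of its intersections with the H_i. Then there exists a basis of H such that every basis vector lies in H_i for some i ∈ ι, and the basis is simultaneously compatible with F and with G: for every λ ∈ ℝ, F^λ is spanned by the set of basis vectors it contains, and likewise G^λ is spanned by the set of basis vectors it contains. -/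
/-!
Each graded piece `H_i` is treated separately: the two filtrations restrict to two chains of
subspaces of `H_i`, and compatible bases of the pieces assemble into a basis of `H` compatible
with every graded subspace.

Two chains `S`, `T` of subspaces of `V` admit a common compatible basis, by induction on
`dim V`. Pick `v ≠ 0` in the smallest nonzero member of `S`, so that `v` lies in every nonzero
member of `S`, and take a compatible basis of `V ⧸ K v` for the image chains. Lift each of its
vectors `x` into the smallest member of `T` whose image contains `x`. Members of `S` contain
every lift of their image, members of `T` contain the chosen lifts of theirs, and `K v` either
lies in a subspace or meets it trivially; so the lifts together with `v` form a compatible basis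
of `V`.
-/

open Module Submodule

theorem IsChain.exists_isLeast {α : Type*} [Preorder α] [WellFoundedLT α] {s : Set α}
    (hs : IsChain (· ≤ ·) s) (hne : s.Nonempty) : ∃ a, IsLeast s a := by
  obtain ⟨m, hm, hmin⟩ := wellFounded_lt.has_min s hne
  refine ⟨m, hm, fun x hx => ?_⟩
  rcases hs.total hm hx with h | h
  · exact h
  · by_contra h'
    exact hmin x hx (lt_of_le_not_ge h h')

section Ring

variable {R M : Type*} [Ring R] [AddCommGroup M] [Module R M]

theorem exists_lift_mem_of_isChain [IsArtinian R M] {T : Set (Submodule R M)}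
    (hT : IsChain (· ≤ ·) T) (N : Submodule R M) (x : M ⧸ N) :
    ∃ z : M, N.mkQ z = x ∧ ∀ W ∈ T, x ∈ W.map N.mkQ → z ∈ W := by
  have hchain : IsChain (· ≤ ·) {W | W ∈ insert ⊤ T ∧ x ∈ W.map N.mkQ} :=
    (hT.insert fun _ _ _ => Or.inr le_top).mono fun _ hW => hW.1
  obtain ⟨L, ⟨-, z, hzL, hz⟩, hleast⟩ := hchain.exists_isLeast
    ⟨⊤, Set.mem_insert _ _, by simp [range_mkQ]⟩
  exact ⟨z, hz, fun W hW hxW => hleast ⟨Set.mem_insert_of_mem _ hW, hxW⟩ hzL⟩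

theorem DirectSum.IsInternal.linearIndepOn_iUnion_image [Nontrivial R] {ι : Type*}
    [DecidableEq ι] {A : ι → Submodule R M} (h : DirectSum.IsInternal A) {t : ∀ i, Set (A i)}
    (ht : ∀ i, LinearIndepOn R id (t i)) (htop : ∀ i, span R (t i) = ⊤) :
    LinearIndepOn R id (⋃ i, (A i).subtype '' t i) := by
  let b := h.collectedBasis fun i => Basis.mk (ht i) (by simp [htop i])
  have hb : Set.range b = ⋃ i, (A i).subtype '' t i := by
    simp [b, h.collectedBasis_coe, Set.range_sigma_eq_iUnion_range, Set.image_eq_range]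
  exact hb ▸ (linearIndepOn_id_range_iff b.injective).2 b.linearIndependent

theorem DirectSum.IsInternal.span_iUnion_image_eq_top {ι : Type*} [DecidableEq ι]
    {A : ι → Submodule R M} (h : DirectSum.IsInternal A) {t : ∀ i, Set (A i)}
    (htop : ∀ i, span R (t i) = ⊤) : span R (⋃ i, (A i).subtype '' t i) = ⊤ := by
  have hspan (i : ι) : span R ((A i).subtype '' t i) = A i := by
    rw [← map_span, htop, map_subtype_top]
  rw [span_iUnion, iSup_congr hspan, h.submodule_iSup_eq_top]

theorem span_image_subtype_inter_eq {U W : Submodule R M} {t : Set U}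
    (h : span R (t ∩ W.comap U.subtype) = W.comap U.subtype) :
    span R (U.subtype '' t ∩ W) = U ⊓ W := by
  rw [← Set.image_inter_preimage, ← comap_coe, ← map_span, h, map_comap_subtype]

theorem span_iUnion_inter_eq_of_eq_iSup_inf {ι : Type*} {A : ι → Submodule R M}
    {t : ι → Set M} {W : Submodule R M} (hW : W = ⨆ i, W ⊓ A i)
    (ht : ∀ i, span R (t i ∩ W) = A i ⊓ W) : span R ((⋃ i, t i) ∩ W) = W := by
  refine le_antisymm (span_le.2 Set.inter_subset_right) ?_
  calc W = ⨆ i, A i ⊓ W := by simpa only [inf_comm] using hW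
    _ ≤ span R ((⋃ i, t i) ∩ W) := iSup_le fun i =>
      ht i ▸ span_mono (Set.inter_subset_inter_left _ (Set.subset_iUnion _ i))

end Ring

section DivisionRing

variable {K V : Type*} [DivisionRing K] [AddCommGroup V] [Module K V]

theorem linearIndepOn_insert_image_of_quotient {v : V} (hv : v ≠ 0) {t : Set (V ⧸ K ∙ v)}
    (ht : LinearIndepOn K id t) {z : V ⧸ (K ∙ v) → V} (hz : ∀ x, (K ∙ v).mkQ (z x) = x) :
    LinearIndepOn K id (insert v (z '' t)) := by
  rw [← Set.singleton_union]
  refine (LinearIndepOn.singleton (v := id) hv).union_id_of_quotient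
    (M' := K ∙ v) (by simp) ?_
  have hcomp : (K ∙ v).mkQ ∘ z = id := funext hz
  exact LinearIndepOn.image_of_comp _ _ (hcomp ▸ ht)

theorem span_insert_image_inter_eq {v : V} {W : Submodule K V} {t : Set (V ⧸ K ∙ v)}
    {z : V ⧸ (K ∙ v) → V} (hz : ∀ x, (K ∙ v).mkQ (z x) = x)
    (hzW : ∀ x ∈ t, x ∈ W.map (K ∙ v).mkQ → z x ∈ W)
    (ht : span K (t ∩ W.map (K ∙ v).mkQ) = W.map (K ∙ v).mkQ) :
    span K (insert v (z '' t) ∩ W) = W := by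
  set W' := span K (insert v (z '' t) ∩ W)
  refine le_antisymm (span_le.2 Set.inter_subset_right) ?_
  have hmap : W.map (K ∙ v).mkQ ≤ W'.map (K ∙ v).mkQ := by
    rw [← ht, span_le]
    rintro x ⟨hxt, hxW⟩
    exact ⟨z x, subset_span ⟨Set.mem_insert_of_mem _ ⟨x, hxt, rfl⟩, hzW x hxt hxW⟩, hz x⟩
  have hsup : W ≤ (K ∙ v) ⊔ W' := by
    rw [← comap_map_mkQ]
    exact (le_comap_map _ _).trans (comap_mono hmap)
  -- A vector of `W` is `c • v + w` with `w ∈ W'`; if `c ≠ 0` then `v ∈ W`, so `v ∈ W'`.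
  intro x hx
  obtain ⟨n, hn, w, hw, rfl⟩ := mem_sup.1 (hsup hx)
  obtain ⟨c, rfl⟩ := mem_span_singleton.1 hn
  rcases eq_or_ne c 0 with rfl | hc
  · simpa using hw
  have hvW : v ∈ W := by
    have : c • v ∈ W := by
      simpa using W.sub_mem hx (span_le.2 Set.inter_subset_right hw)
    simpa [hc] using W.smul_mem c⁻¹ this
  exact add_mem (smul_mem _ _ (subset_span ⟨Set.mem_insert _ _, hvW⟩)) hw

theorem exists_linearIndepOn_span_inter_eq_of_isChain [FiniteDimensional K V]
    {S T : Set (Submodule K V)} (hS : IsChain (· ≤ ·) S) (hT : IsChain (· ≤ ·) T) :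
    ∃ t : Set V, LinearIndepOn K id t ∧ span K t = ⊤ ∧ ∀ W ∈ S ∪ T, span K (t ∩ W) = W := by
  induction hn : finrank K V generalizing V with
  | zero =>
    have : Subsingleton V := finrank_zero_iff.mp hn
    exact ⟨∅, linearIndepOn_empty _ _, Subsingleton.elim _ _, fun _ _ => Subsingleton.elim _ _⟩
  | succ n ih =>
    have : Nontrivial V := finrank_pos_iff.mp (by rw [hn]; exact n.succ_pos)
    have hS' : IsChain (· ≤ ·) {W | W ∈ insert ⊤ S ∧ W ≠ ⊥} :=
      (hS.insert fun _ _ _ => Or.inr le_top).mono fun _ hW => hW.1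
    obtain ⟨A, ⟨-, hA⟩, hAS⟩ := hS'.exists_isLeast ⟨⊤, Set.mem_insert _ _, top_ne_bot⟩
    obtain ⟨v, hvA, hv⟩ := exists_mem_ne_zero_of_ne_bot hA
    have hvS : ∀ W ∈ S, W ≠ ⊥ → (K ∙ v) ≤ W := fun W hW hW0 =>
      (span_singleton_le_iff_mem _ _).2 (hAS ⟨Set.mem_insert_of_mem _ hW, hW0⟩ hvA)
    have hrank : finrank K (V ⧸ K ∙ v) = n := by
      have := (K ∙ v).finrank_quotient_add_finrank
      rw [finrank_span_singleton hv] at this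
      omega
    obtain ⟨t, ht, htop, hcompat⟩ := ih (S := map (K ∙ v).mkQ '' S) (T := map (K ∙ v).mkQ '' T)
      (hS.image_of_map_rel (· ≤ ·) (· ≤ ·) _ fun _ _ => map_mono)
      (hT.image_of_map_rel (· ≤ ·) (· ≤ ·) _ fun _ _ => map_mono) hrank
    choose z hz hzT using exists_lift_mem_of_isChain hT (K ∙ v)
    refine ⟨insert v (z '' t), linearIndepOn_insert_image_of_quotient hv ht hz, ?_, ?_⟩
    · simpa using span_insert_image_inter_eq (W := ⊤) hz (fun _ _ _ => mem_top)
        (by simpa using htop)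
    rintro W (hW | hW)
    · rcases eq_or_ne W ⊥ with rfl | hW0
      · exact eq_bot_iff.2 (span_le.2 Set.inter_subset_right)
      refine span_insert_image_inter_eq hz (fun x _ hx => ?_) (hcompat _ (Or.inl ⟨W, hW, rfl⟩))
      rw [← sup_eq_right.2 (hvS W hW hW0), ← comap_map_mkQ, mem_comap, hz]
      exact hx
    · exact span_insert_image_inter_eq hz (fun x _ => hzT x W hW)
        (hcompat _ (Or.inr ⟨W, hW, rfl⟩))

end DivisionRing

theorem stmt_12 {K : Type*} [Field K] {H : Type*} [AddCommGroup H] [Module K H]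
    [FiniteDimensional K H] {ι : Type*} [DecidableEq ι]
    (Hgr : ι → Submodule K H) (hinternal : DirectSum.IsInternal Hgr)
    (F G : ℝ → Submodule K H)
    (hF : ∀ lam mu : ℝ, lam ≤ mu → F mu ≤ F lam)
    (hG : ∀ lam mu : ℝ, lam ≤ mu → G mu ≤ G lam)
    (hFgr : ∀ lam : ℝ, F lam = ⨆ i : ι, F lam ⊓ Hgr i)
    (hGgr : ∀ lam : ℝ, G lam = ⨆ i : ι, G lam ⊓ Hgr i) :
    ∃ s : Finset H,
      LinearIndependent K ((↑) : {x // x ∈ s} → H) ∧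
      Submodule.span K (s : Set H) = ⊤ ∧
      (∀ v ∈ s, ∃ i : ι, v ∈ Hgr i) ∧
      (∀ lam : ℝ, F lam = Submodule.span K ((s : Set H) ∩ (F lam : Set H))) ∧
      (∀ lam : ℝ, G lam = Submodule.span K ((s : Set H) ∩ (G lam : Set H))) := by
  have hchain (Φ : ℝ → Submodule K H) (hΦ : Antitone Φ) (i : ι) :
      IsChain (· ≤ ·) (Set.range fun l => (Φ l).comap (Hgr i).subtype) :=
    Antitone.isChain_range fun _ _ h => comap_mono (hΦ h)
  choose t ht htop hcompat using fun i =>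
    exists_linearIndepOn_span_inter_eq_of_isChain (hchain F hF i) (hchain G hG i)
  have hu := hinternal.linearIndepOn_iUnion_image ht htop
  obtain ⟨s, hs⟩ := hu.setFinite.exists_finset_coe
  rw [← hs] at hu
  refine ⟨s, hu, hs ▸ hinternal.span_iUnion_image_eq_top htop, fun v hv => ?_, fun l => ?_,
    fun l => ?_⟩
  · rw [← Finset.mem_coe, hs] at hv
    obtain ⟨i, x, -, rfl⟩ := Set.mem_iUnion.1 hv
    exact ⟨i, x.2⟩
  · rw [hs, span_iUnion_inter_eq_of_eq_iSup_inf (hFgr l) fun i =>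
      span_image_subtype_inter_eq (hcompat i _ (Or.inl ⟨l, rfl⟩))]
  · rw [hs, span_iUnion_inter_eq_of_eq_iSup_inf (hGgr l) fun i =>
      span_image_subtype_inter_eq (hcompat i _ (Or.inr ⟨l, rfl⟩))]
end
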